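/- arXiv:1503.06893 — 4 statements merged into one kernel-verified Lean document; each statement's English description precedes it below -/
import Mathlib

section
/- Let G be a finite abelian group, let E be a standard subspace of l²(G) (the span of {e_g : g ∈ S} for some subset S ⊆ G) and let F be a Fourier subspace of l²(G) (the span of {ê_φ : φ ∈ T} for some subset T of the character group of G). If dim(E) · dim(F) < |G|, then E ∩ F = {0}. -/
/-- `e_g`, the indicator function of `{g}`, as an element of `l²(G) = EuclideanSpace ℂ G`. -/
noncomputable def stdBasisVec {G : Type*} [Fintype G] [DecidableEq G] (g : G) :
    EuclideanSpace ℂ G :=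
  EuclideanSpace.single g (1 : ℂ)

/-- `ê_φ = |G|^{-1/2} · φ`, the normalized character, as an element of `l²(G)`. -/
noncomputable def fourierBasisVec {G : Type*} [CommGroup G] [Fintype G] (φ : G →* ℂ) :
    EuclideanSpace ℂ G :=
  ((Real.sqrt (Fintype.card G))⁻¹ : ℂ) • (WithLp.toLp 2 (⇑φ) : EuclideanSpace ℂ G)

/-- A *standard* subspace of `l²(G)` is the span of `{e_g : g ∈ S}` for some `S ⊆ G`. -/
def IsStandardSubspace {G : Type*} [CommGroup G] [Fintype G] [DecidableEq G]
    (E : Submodule ℂ (EuclideanSpace ℂ G)) : Prop :=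
  ∃ S : Set G, E = Submodule.span ℂ (stdBasisVec '' S)

/-- A *Fourier* subspace of `l²(G)` is the span of `{ê_φ : φ ∈ T}` for some set `T`
of characters of `G` (group homomorphisms of `G` into the unit circle in `ℂ`). -/
def IsFourierSubspace {G : Type*} [CommGroup G] [Fintype G]
    (F : Submodule ℂ (EuclideanSpace ℂ G)) : Prop :=
  ∃ T : Set (G →* ℂ), (∀ φ ∈ T, ∀ g : G, ‖φ g‖ = 1) ∧
    F = Submodule.span ℂ (fourierBasisVec '' T)

/-! If `f ∈ E ⊓ F`, expand `f` in the orthonormal characters spanning `F`. Since every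
`‖⟪e_g, ê_φ⟫‖` equals `|G|^{-1/2}`, Cauchy–Schwarz bounds each coordinate by
`‖f g‖² ≤ dim F / |G| · ‖f‖²`, and summing over the `dim E` points carrying `f` gives
`‖f‖² ≤ dim E · dim F / |G| · ‖f‖²`, so `f = 0`. This only uses that the two orthonormal
families are incoherent: all their mutual inner products are at most `μ`, with
`|ι| · |κ| · μ² < 1`. -/

open Finset Submodule
open scoped InnerProductSpace

section Incoherence

variable {𝕜 V ι κ : Type*} [RCLike 𝕜] [NormedAddCommGroup V] [InnerProductSpace 𝕜 V]
  [Fintype ι] [Fintype κ] {u : ι → V} {v : κ → V} {f : V}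

theorem Orthonormal.sum_inner_smul_eq_of_mem_span (hv : Orthonormal 𝕜 v)
    (hf : f ∈ span 𝕜 (Set.range v)) : ∑ j, ⟪v j, f⟫_𝕜 • v j = f := by
  obtain ⟨c, rfl⟩ := (mem_span_range_iff_exists_fun 𝕜).1 hf
  simp_rw [hv.inner_right_fintype]

theorem Orthonormal.norm_sq_eq_sum_of_mem_span (hv : Orthonormal 𝕜 v)
    (hf : f ∈ span 𝕜 (Set.range v)) : ‖f‖ ^ 2 = ∑ j, ‖⟪v j, f⟫_𝕜‖ ^ 2 := by
  obtain ⟨c, rfl⟩ := (mem_span_range_iff_exists_fun 𝕜).1 hf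
  simp_rw [hv.inner_right_fintype]
  rw [← RCLike.ofReal_inj (K := 𝕜), RCLike.ofReal_pow, ← inner_self_eq_norm_sq_to_K,
    hv.inner_sum]
  push_cast
  simp_rw [RCLike.conj_mul]

theorem Orthonormal.norm_inner_sq_le_of_mem_span (hv : Orthonormal 𝕜 v)
    (hf : f ∈ span 𝕜 (Set.range v)) (x : V) :
    ‖⟪x, f⟫_𝕜‖ ^ 2 ≤ (∑ j, ‖⟪x, v j⟫_𝕜‖ ^ 2) * ‖f‖ ^ 2 := by
  have hexpand : ⟪x, f⟫_𝕜 = ∑ j, ⟪x, v j⟫_𝕜 * ⟪v j, f⟫_𝕜 := by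
    conv_lhs => rw [← hv.sum_inner_smul_eq_of_mem_span hf]
    simp_rw [inner_sum, inner_smul_right, mul_comm]
  calc ‖⟪x, f⟫_𝕜‖ ^ 2 ≤ (∑ j, ‖⟪x, v j⟫_𝕜‖ * ‖⟪v j, f⟫_𝕜‖) ^ 2 := by
        rw [hexpand]
        gcongr
        exact (norm_sum_le _ _).trans_eq (by simp_rw [norm_mul])
    _ ≤ (∑ j, ‖⟪x, v j⟫_𝕜‖ ^ 2) * ∑ j, ‖⟪v j, f⟫_𝕜‖ ^ 2 := sum_mul_sq_le_sq_mul_sq _ _ _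
    _ = (∑ j, ‖⟪x, v j⟫_𝕜‖ ^ 2) * ‖f‖ ^ 2 := by rw [hv.norm_sq_eq_sum_of_mem_span hf]

theorem Orthonormal.norm_sq_le_of_mem_span_inf (hu : Orthonormal 𝕜 u) (hv : Orthonormal 𝕜 v)
    {μ : ℝ} (hμ : ∀ i j, ‖⟪u i, v j⟫_𝕜‖ ≤ μ)
    (hf : f ∈ span 𝕜 (Set.range u) ⊓ span 𝕜 (Set.range v)) :
    ‖f‖ ^ 2 ≤ Fintype.card ι * Fintype.card κ * μ ^ 2 * ‖f‖ ^ 2 := by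
  obtain ⟨hfu, hfv⟩ := mem_inf.1 hf
  calc ‖f‖ ^ 2 = ∑ i, ‖⟪u i, f⟫_𝕜‖ ^ 2 := hu.norm_sq_eq_sum_of_mem_span hfu
    _ ≤ ∑ i, (∑ j, ‖⟪u i, v j⟫_𝕜‖ ^ 2) * ‖f‖ ^ 2 :=
        sum_le_sum fun i _ => hv.norm_inner_sq_le_of_mem_span hfv (u i)
    _ ≤ ∑ _i : ι, (∑ _j : κ, μ ^ 2) * ‖f‖ ^ 2 := by gcongr with i _ j; exact hμ i j
    _ = Fintype.card ι * Fintype.card κ * μ ^ 2 * ‖f‖ ^ 2 := by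
        simp only [sum_const, card_univ, nsmul_eq_mul]
        ring

theorem Orthonormal.span_inf_span_eq_bot_of_norm_inner_le (hu : Orthonormal 𝕜 u)
    (hv : Orthonormal 𝕜 v) {μ : ℝ} (hμ : ∀ i j, ‖⟪u i, v j⟫_𝕜‖ ≤ μ)
    (hlt : Fintype.card ι * Fintype.card κ * μ ^ 2 < 1) :
    span 𝕜 (Set.range u) ⊓ span 𝕜 (Set.range v) = ⊥ := by
  refine eq_bot_iff.2 fun f hf => (mem_bot 𝕜).2 ?_
  have hle := hu.norm_sq_le_of_mem_span_inf hv hμ hf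
  have hnorm : ‖f‖ ^ 2 = 0 := by nlinarith [sq_nonneg ‖f‖]
  simpa using hnorm

end Incoherence

theorem MonoidHom.sum_apply_inv_mul_apply_eq_zero {G R : Type*} [CommGroup G] [Fintype G]
    [CommRing R] [IsDomain R] {φ ψ : G →* R} (hne : φ ≠ ψ) : ∑ g, φ g⁻¹ * ψ g = 0 := by
  refine sum_hom_units_eq_zero (φ.comp invMonoidHom * ψ) fun h => hne (MonoidHom.ext fun g => ?_)
  have hinv : φ g⁻¹ * ψ g = 1 := by simpa using DFunLike.congr_fun h g
  have hφ : φ g⁻¹ * φ g = 1 := by rw [← map_mul, inv_mul_cancel, map_one]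
  exact mul_left_cancel₀ (left_ne_zero_of_mul_eq_one hφ) (hφ.trans hinv.symm)

theorem MonoidHom.norm_apply_eq_one {G : Type*} [Group G] [Finite G] (φ : G →* ℂ) (g : G) :
    ‖φ g‖ = 1 :=
  Complex.norm_eq_one_of_pow_eq_one (by rw [← map_pow, pow_orderOf_eq_one, map_one])
    (orderOf_pos g).ne'

theorem MonoidHom.conj_apply_eq_apply_inv {G : Type*} [Group G] [Finite G] (φ : G →* ℂ) (g : G) :
    starRingEnd ℂ (φ g) = φ g⁻¹ := by
  rw [← RCLike.inv_eq_conj (φ.norm_apply_eq_one g)]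
  exact (eq_inv_of_mul_eq_one_left (by rw [← map_mul, inv_mul_cancel, map_one])).symm

section FourierBasis

variable {G : Type*} [CommGroup G] [Fintype G]

theorem inner_fourierBasisVec (φ ψ : G →* ℂ) :
    ⟪fourierBasisVec φ, fourierBasisVec ψ⟫_ℂ =
      (Fintype.card G : ℂ)⁻¹ * ∑ g, φ g⁻¹ * ψ g := by
  simp only [fourierBasisVec, inner_smul_left, inner_smul_right, PiLp.inner_apply,
    RCLike.inner_apply, φ.conj_apply_eq_apply_inv, mul_comm (ψ _)]
  rw [map_inv₀, Complex.conj_ofReal, ← mul_assoc, ← mul_inv, ← Complex.ofReal_mul,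
    Real.mul_self_sqrt (Nat.cast_nonneg _), Complex.ofReal_natCast]

theorem orthonormal_fourierBasisVec : Orthonormal ℂ (fourierBasisVec (G := G)) := by
  classical
  rw [orthonormal_iff_ite]
  intro φ ψ
  rw [inner_fourierBasisVec]
  split_ifs with h
  · subst h
    simp_rw [← map_mul, inv_mul_cancel, map_one, sum_const, card_univ, nsmul_one]
    exact inv_mul_cancel₀ (Nat.cast_ne_zero.2 Fintype.card_ne_zero)
  · rw [MonoidHom.sum_apply_inv_mul_apply_eq_zero h, mul_zero]

variable [DecidableEq G]

theorem norm_inner_stdBasisVec_fourierBasisVec (g : G) (φ : G →* ℂ) :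
    ‖⟪stdBasisVec g, fourierBasisVec φ⟫_ℂ‖ = (Real.sqrt (Fintype.card G))⁻¹ := by
  simp [stdBasisVec, fourierBasisVec, EuclideanSpace.inner_single_left, φ.norm_apply_eq_one]

end FourierBasis

/-- If `E` is a standard subspace and `F` a Fourier subspace of `l²(G)` with
`dim E · dim F < |G|`, then `E ∩ F = {0}`. -/
theorem stmt0 {G : Type*} [CommGroup G] [Fintype G] [DecidableEq G]
    (E F : Submodule ℂ (EuclideanSpace ℂ G))
    (hE : IsStandardSubspace E) (hF : IsFourierSubspace F)
    (h : Module.finrank ℂ E * Module.finrank ℂ F < Fintype.card G) :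
    E ⊓ F = ⊥ := by
  classical
  obtain ⟨S, rfl⟩ := hE
  obtain ⟨T, -, rfl⟩ := hF
  have hS : Orthonormal ℂ fun g : S => stdBasisVec (g : G) :=
    EuclideanSpace.orthonormal_single.comp _ Subtype.val_injective
  have hT : Orthonormal ℂ fun φ : T => fourierBasisVec (φ : G →* ℂ) :=
    orthonormal_fourierBasisVec.comp _ Subtype.val_injective
  have : Finite T := hT.linearIndependent.finite
  have := Fintype.ofFinite T
  rw [Set.image_eq_range, Set.image_eq_range] at h ⊢
  rw [finrank_span_eq_card hS.linearIndependent, finrank_span_eq_card hT.linearIndependent] at h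
  refine hS.span_inf_span_eq_bot_of_norm_inner_le hT
    (fun g φ => (norm_inner_stdBasisVec_fourierBasisVec (g : G) (φ : G →* ℂ)).le) ?_
  have hG : (0 : ℝ) < Fintype.card G := Nat.cast_pos.2 Fintype.card_pos
  rw [inv_pow, Real.sq_sqrt hG.le, ← div_eq_mul_inv, div_lt_one hG]
  exact_mod_cast h
end

section
/- Let A be a positive semidefinite operator on ℂ^m, let a, δ > 0 with ‖A‖ < a, and let v ∈ ℂ^m. Define the upper potential Φ^a(A) = Tr((aI − A)^{-1}). If ⟨((a+δ)I − A)^{-2} v, v⟩ / (Φ^a(A) − Φ^{a+δ}(A)) + ⟨((a+δ)I − A)^{-1} v, v⟩ ≤ 1, then ‖A + vv*‖ < a + δ and Φ^{a+δ}(A + vv*) ≤ Φ^a(A). -/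
open scoped ComplexOrder Matrix

/-- The *upper potential* `Φ^a(A) = Tr((aI - A)⁻¹)` of an operator `A` on `ℂ^m`
(represented as an `m × m` complex matrix). -/
noncomputable def upperPotential {m : ℕ} (a : ℝ) (A : Matrix (Fin m) (Fin m) ℂ) : ℂ :=
  (((a : ℂ) • (1 : Matrix (Fin m) (Fin m) ℂ) - A)⁻¹).trace

/-!
Put `B = (a + δ)I - A`. For `S ⪰ 0` one has `‖S‖ < c` iff `cI - S` is positive definite, so
`B ≻ 0`, and by Sherman–Morrison
`(B - vv*)⁻¹ = B⁻¹ + (1 - v*B⁻¹v)⁻¹ B⁻¹vv*B⁻¹`.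
Since `Φ^a(A) - Φ^{a+δ}(A) = δ Tr((aI - A)⁻¹B⁻¹) > 0`, the hypothesis forces `v*B⁻¹v < 1`.
The right-hand side is then positive definite, hence so is `(a + δ)I - (A + vv*) = B - vv*`, and
taking traces gives `Φ^{a+δ}(A + vv*) = Φ^{a+δ}(A) + v*B⁻²v / (1 - v*B⁻¹v) ≤ Φ^a(A)`.
-/

namespace CStarAlgebra

variable {A : Type*} [CStarAlgebra A] [PartialOrder A] [StarOrderedRing A] [Nontrivial A]

lemma norm_lt_iff_isStrictlyPositive_algebraMap_sub {a : A} (ha : 0 ≤ a) (c : ℝ) :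
    ‖a‖ < c ↔ IsStrictlyPositive (algebraMap ℝ A c - a) := by
  rw [StarOrderedRing.isStrictlyPositive_iff_spectrum_pos (R := ℝ) _
      (.sub (.algebraMap A (.all c)) ha.isSelfAdjoint), ← spectrum.singleton_sub_eq]
  simp only [Set.singleton_sub, Set.forall_mem_image, sub_pos]
  refine ⟨fun h x hx => ?_, fun h => h (norm_mem_spectrum_of_nonneg ha)⟩
  exact (Real.le_norm_self x).trans (spectrum.norm_le_norm_of_mem hx) |>.trans_lt h

end CStarAlgebra

namespace Matrix

variable {n : Type*} [Fintype n] [DecidableEq n]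

section ShermanMorrison

variable {K : Type*} [Field K] {B : Matrix n n K}

theorem inv_sub_vecMulVec (hB : IsUnit B) (u w : n → K) (h : (B⁻¹ *ᵥ u) ⬝ᵥ w ≠ 1) :
    (B - vecMulVec u w)⁻¹ =
      B⁻¹ + (1 - (B⁻¹ *ᵥ u) ⬝ᵥ w)⁻¹ • vecMulVec (B⁻¹ *ᵥ u) (w ᵥ* B⁻¹) := by
  have hdet : IsUnit B.det := (isUnit_iff_isUnit_det B).1 hB
  refine inv_eq_right_inv ?_
  have hBy : B * vecMulVec (B⁻¹ *ᵥ u) (w ᵥ* B⁻¹) = vecMulVec u (w ᵥ* B⁻¹) := by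
    rw [mul_vecMulVec, mulVec_mulVec, mul_nonsing_inv B hdet, one_mulVec]
  have hWy : vecMulVec u w * vecMulVec (B⁻¹ *ᵥ u) (w ᵥ* B⁻¹) =
      ((B⁻¹ *ᵥ u) ⬝ᵥ w) • vecMulVec u (w ᵥ* B⁻¹) := by
    rw [vecMulVec_mul_vecMulVec, dotProduct_comm, vecMulVec_smul]
  have hcoef : (1 - (B⁻¹ *ᵥ u) ⬝ᵥ w)⁻¹ * ((B⁻¹ *ᵥ u) ⬝ᵥ w) = (1 - (B⁻¹ *ᵥ u) ⬝ᵥ w)⁻¹ - 1 := by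
    field_simp [sub_ne_zero.2 h.symm]
    ring
  rw [Matrix.sub_mul, Matrix.mul_add, Matrix.mul_add, mul_nonsing_inv B hdet, Matrix.mul_smul,
    Matrix.mul_smul, hBy, hWy, vecMulVec_mul, smul_smul, hcoef, sub_smul, one_smul]
  abel

theorem trace_inv_sub_vecMulVec (hB : IsUnit B) (u w : n → K) (h : (B⁻¹ *ᵥ u) ⬝ᵥ w ≠ 1) :
    (B - vecMulVec u w)⁻¹.trace =
      B⁻¹.trace + (1 - (B⁻¹ *ᵥ u) ⬝ᵥ w)⁻¹ * ((B⁻¹ ^ 2 *ᵥ u) ⬝ᵥ w) := by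
  rw [inv_sub_vecMulVec hB u w h, trace_add, trace_smul, trace_vecMulVec, smul_eq_mul,
    dotProduct_comm _ (w ᵥ* B⁻¹), ← dotProduct_mulVec, mulVec_mulVec, ← sq, dotProduct_comm w]

end ShermanMorrison

variable {𝕜 : Type*} [RCLike 𝕜]

theorem PosDef.sub_vecMulVec_self_star {B : Matrix n n 𝕜} (hB : B.PosDef) (v : n → 𝕜)
    (h : (B⁻¹ *ᵥ v) ⬝ᵥ star v < 1) : (B - vecMulVec v (star v)).PosDef := by
  have hstar : star v ᵥ* B⁻¹ = star (B⁻¹ *ᵥ v) := by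
    rw [star_mulVec, hB.inv.isHermitian.eq]
  rw [← posDef_inv_iff, inv_sub_vecMulVec hB.isUnit v (star v) h.ne, hstar]
  exact hB.inv.add_posSemidef
    ((posSemidef_vecMulVec_self_star _).smul (inv_nonneg.2 (sub_pos.2 h).le))

theorem PosDef.dotProduct_inv_mulVec_lt_one {B : Matrix n n 𝕜} (hB : B.PosDef) {Δ : 𝕜}
    (hΔ : 0 < Δ) (v : n → 𝕜) (h : (B⁻¹ ^ 2 *ᵥ v) ⬝ᵥ star v / Δ + (B⁻¹ *ᵥ v) ⬝ᵥ star v ≤ 1) :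
    (B⁻¹ *ᵥ v) ⬝ᵥ star v < 1 := by
  rcases eq_or_ne v 0 with rfl | hv
  · simp
  have hB2 : (B⁻¹ ^ 2).PosDef :=
    (hB.inv.posSemidef.pow 2).posDef_iff_isUnit.2 (hB.inv.isUnit.pow 2)
  have hβ : 0 < (B⁻¹ ^ 2 *ᵥ v) ⬝ᵥ star v := by
    rw [dotProduct_comm]
    exact hB2.dotProduct_mulVec_pos hv
  calc (B⁻¹ *ᵥ v) ⬝ᵥ star v ≤ 1 - _ := le_sub_iff_add_le'.2 h
    _ < 1 := sub_lt_self _ (div_pos hβ hΔ)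

open scoped MatrixOrder in
theorem PosDef.inv_sub_inv_add_smul_one {M : Matrix n n 𝕜} (hM : M.PosDef) {c : ℝ} (hc : 0 < c) :
    (M⁻¹ - (M + c • 1)⁻¹).PosDef := by
  set N := M + c • 1
  have hN : N.PosDef := hM.add_posSemidef (PosSemidef.one.smul hc.le)
  have hMN : (M * N).PosDef := IsStrictlyPositive.posDef <|
    (hM.isStrictlyPositive.commute_iff hN.isStrictlyPositive).1
      ((Commute.refl M).add_right ((Commute.one_right M).smul_right c))
  have hMdet := (isUnit_iff_isUnit_det M).1 hM.isUnit
  have hNdet := (isUnit_iff_isUnit_det N).1 hN.isUnit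
  have hdiff : M⁻¹ - N⁻¹ = c • (M * N)⁻¹ :=
    calc M⁻¹ - N⁻¹ = N⁻¹ * (N - M) * M⁻¹ := by
          rw [Matrix.mul_sub, Matrix.sub_mul, nonsing_inv_mul N hNdet, Matrix.one_mul,
            mul_nonsing_inv_cancel_right M _ hMdet]
      _ = c • (M * N)⁻¹ := by
          rw [add_sub_cancel_left, mul_inv_rev, Matrix.mul_smul, Matrix.smul_mul, Matrix.mul_one]
  rw [hdiff]
  exact hMN.inv.smul hc

open scoped Matrix.Norms.L2Operator MatrixOrder in
theorem norm_toEuclideanCLM_lt_iff_posDef [Nonempty n] {S : Matrix n n ℂ} (hS : S.PosSemidef)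
    (c : ℝ) : ‖toEuclideanCLM (𝕜 := ℂ) S‖ < c ↔ ((c : ℂ) • (1 : Matrix n n ℂ) - S).PosDef := by
  rw [← cstar_norm_def, CStarAlgebra.norm_lt_iff_isStrictlyPositive_algebraMap_sub hS.nonneg,
    isStrictlyPositive_iff_posDef, Algebra.algebraMap_eq_smul_one,
    RCLike.real_smul_eq_coe_smul (K := ℂ)]
  rfl

end Matrix

open Matrix

theorem upperPotential_lt_upperPotential {m : ℕ} [Nonempty (Fin m)]
    {A : Matrix (Fin m) (Fin m) ℂ} {a b : ℝ} (hab : a < b)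
    (hA : ((a : ℂ) • (1 : Matrix (Fin m) (Fin m) ℂ) - A).PosDef) :
    upperPotential b A < upperPotential a A := by
  have hshift : (b : ℂ) • (1 : Matrix (Fin m) (Fin m) ℂ) - A = ((a : ℂ) • 1 - A) + (b - a) • 1 := by
    rw [Complex.coe_smul, Complex.coe_smul]
    module
  have h := (hA.inv_sub_inv_add_smul_one (sub_pos.2 hab)).trace_pos
  rw [← hshift, trace_sub] at h
  exact sub_pos.1 h

theorem stmt7_general {m : ℕ} (A : Matrix (Fin m) (Fin m) ℂ) (hA : A.PosSemidef)
    (a δ : ℝ) (hδ : 0 < δ)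
    (hnorm : ‖Matrix.toEuclideanCLM (𝕜 := ℂ) A‖ < a)
    (v : Fin m → ℂ)
    (hv : ((((((a + δ : ℝ) : ℂ) • (1 : Matrix (Fin m) (Fin m) ℂ) - A)⁻¹ ^ 2).mulVec v) ⬝ᵥ
            star v) / (upperPotential a A - upperPotential (a + δ) A)
        + (((((a + δ : ℝ) : ℂ) • (1 : Matrix (Fin m) (Fin m) ℂ) - A)⁻¹).mulVec v) ⬝ᵥ
            star v ≤ 1) :
    ‖Matrix.toEuclideanCLM (𝕜 := ℂ) (A + Matrix.vecMulVec v (star v))‖ < a + δ ∧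
    upperPotential (a + δ) (A + Matrix.vecMulVec v (star v)) ≤ upperPotential a A := by
  have hAa : ‖toEuclideanCLM (𝕜 := ℂ) A‖ < a + δ := by linarith
  rcases isEmpty_or_nonempty (Fin m) with hm | hm
  · refine ⟨?_, by simp [upperPotential]⟩
    rwa [Subsingleton.elim (A + vecMulVec v (star v)) A]
  set B := ((a + δ : ℝ) : ℂ) • (1 : Matrix (Fin m) (Fin m) ℂ) - A
  have hB : B.PosDef := (norm_toEuclideanCLM_lt_iff_posDef hA _).1 hAa
  have hgap : 0 < upperPotential a A - upperPotential (a + δ) A :=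
    sub_pos.2 <| upperPotential_lt_upperPotential (lt_add_of_pos_right a hδ)
      ((norm_toEuclideanCLM_lt_iff_posDef hA a).1 hnorm)
  have hα : (B⁻¹ *ᵥ v) ⬝ᵥ star v < 1 := hB.dotProduct_inv_mulVec_lt_one hgap v hv
  have hsub : ((a + δ : ℝ) : ℂ) • 1 - (A + vecMulVec v (star v)) = B - vecMulVec v (star v) :=
    sub_add_eq_sub_sub _ _ _
  constructor
  · rw [norm_toEuclideanCLM_lt_iff_posDef (hA.add (posSemidef_vecMulVec_self_star v)), hsub]
    exact hB.sub_vecMulVec_self_star v hα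
  · rw [upperPotential, hsub, trace_inv_sub_vecMulVec hB.isUnit v (star v) hα.ne]
    change upperPotential (a + δ) A + _ ≤ _
    rw [← le_sub_iff_add_le', inv_mul_le_iff₀ (sub_pos.2 hα), ← div_le_iff₀ hgap]
    exact le_sub_iff_add_le.2 hv

/-- Srivastava's barrier lemma: if `A ⪰ 0` on `ℂ^m`, `a, δ > 0`, `‖A‖ < a`, `v ∈ ℂ^m`, and
`⟨((a+δ)I - A)⁻² v, v⟩ / (Φ^a(A) - Φ^{a+δ}(A)) + ⟨((a+δ)I - A)⁻¹ v, v⟩ ≤ 1`,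
then `‖A + vv*‖ < a + δ` and `Φ^{a+δ}(A + vv*) ≤ Φ^a(A)`. -/
theorem stmt7 {m : ℕ} (A : Matrix (Fin m) (Fin m) ℂ) (hA : A.PosSemidef)
    (a δ : ℝ) (ha : 0 < a) (hδ : 0 < δ)
    (hnorm : ‖Matrix.toEuclideanCLM (𝕜 := ℂ) A‖ < a)
    (v : Fin m → ℂ)
    (hv : ((((((a + δ : ℝ) : ℂ) • (1 : Matrix (Fin m) (Fin m) ℂ) - A)⁻¹ ^ 2).mulVec v) ⬝ᵥ
            star v) / (upperPotential a A - upperPotential (a + δ) A)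
        + (((((a + δ : ℝ) : ℂ) • (1 : Matrix (Fin m) (Fin m) ℂ) - A)⁻¹).mulVec v) ⬝ᵥ
            star v ≤ 1) :
    ‖Matrix.toEuclideanCLM (𝕜 := ℂ) (A + Matrix.vecMulVec v (star v))‖ < a + δ ∧
    upperPotential (a + δ) (A + Matrix.vecMulVec v (star v)) ≤ upperPotential a A :=
  stmt7_general A hA a δ hδ hnorm v hv
end

section
/- Let A be a positive semidefinite operator on ℂ^m with m ≥ 1, and let a < a' be real numbers with ‖A‖ < a. Then Φ^a(A) − Φ^{a'}(A) = (a'−a)·Tr((aI − A)^{-1}(a'I − A)^{-1}) and moreover Φ^a(A) − Φ^{a'}(A) > (a'−a)·Tr((a'I − A)^{-2}). -/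
open scoped ComplexOrder

/-! With `B = aI - A` and `B' = a'I - A`, both positive definite since `‖A‖ < a < a'`,
`B' - B = (a' - a) I` gives the resolvent identity `B⁻¹ - B'⁻¹ = (a' - a) B⁻¹ B'⁻¹`, whose
trace is the identity. Multiplying it by `B'⁻¹` on the right, the gap in the inequality is
`(a' - a)² Tr(B⁻¹ B'⁻²) = (a' - a)² Tr(B'⁻¹ B⁻¹ B'⁻¹)`, the trace of a positive definite
matrix. -/

namespace Matrix

variable {n : Type*} [Fintype n] [DecidableEq n]

open scoped Matrix.Norms.L2Operator MatrixOrder in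
theorem IsHermitian.posDef_smul_one_sub {A : Matrix n n ℂ} (hA : A.IsHermitian) {c : ℝ}
    (hc : ‖toEuclideanCLM (𝕜 := ℂ) A‖ < c) :
    ((c : ℂ) • (1 : Matrix n n ℂ) - A).PosDef := by
  rw [← isStrictlyPositive_iff_posDef, Complex.coe_smul, ← Algebra.algebraMap_eq_smul_one]
  refine (isStrictlyPositive_algebraMap (sub_pos.mpr hc)).of_le ?_
  rw [map_sub, ← cstar_norm_def]
  exact sub_le_sub_left hA.isSelfAdjoint.le_algebraMap_norm_self _

theorem inv_sub_inv_of_sub_eq_smul_one {R : Type*} [CommRing R] {B B' : Matrix n n R}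
    (hB : IsUnit B) (hB' : IsUnit B') {d : R} (h : B' - B = d • 1) :
    B⁻¹ - B'⁻¹ = d • (B⁻¹ * B'⁻¹) := by
  rw [inv_sub_inv (iff_of_true hB hB'), h, Matrix.mul_smul, Matrix.smul_mul, Matrix.mul_one]

theorem PosDef.trace_mul_sq_pos {𝕜 : Type*} [RCLike 𝕜] [Nonempty n] {M N : Matrix n n 𝕜}
    (hM : M.PosDef) (hN : N.IsHermitian) (hNu : IsUnit N) : 0 < (M * N ^ 2).trace := by
  have hconj : (Nᴴ * M * N).PosDef :=
    hM.conjTranspose_mul_mul_same (mulVec_injective_of_isUnit hNu)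
  rw [hN.eq] at hconj
  rw [sq, ← Matrix.mul_assoc, trace_mul_cycle]
  exact hconj.trace_pos

end Matrix

open Matrix

/-- For `A ⪰ 0` on `ℂ^m` (`m ≥ 1`) and `a < a'` with `‖A‖ < a`:
`Φ^a(A) - Φ^{a'}(A) = (a'-a)·Tr((aI-A)⁻¹(a'I-A)⁻¹)`, and moreover
`Φ^a(A) - Φ^{a'}(A) > (a'-a)·Tr((a'I-A)⁻²)`. -/
theorem stmt12 {m : ℕ} (hm : 1 ≤ m) (A : Matrix (Fin m) (Fin m) ℂ) (hA : A.PosSemidef)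
    (a a' : ℝ) (haa' : a < a')
    (hnorm : ‖Matrix.toEuclideanCLM (𝕜 := ℂ) A‖ < a) :
    upperPotential a A - upperPotential a' A =
      ((a' - a : ℝ) : ℂ) *
        Matrix.trace (((a : ℂ) • (1 : Matrix (Fin m) (Fin m) ℂ) - A)⁻¹ *
          ((a' : ℂ) • (1 : Matrix (Fin m) (Fin m) ℂ) - A)⁻¹) ∧
    ((a' - a : ℝ) : ℂ) *
        Matrix.trace ((((a' : ℂ) • (1 : Matrix (Fin m) (Fin m) ℂ) - A)⁻¹) ^ 2) <
      upperPotential a A - upperPotential a' A := by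
  set B := (a : ℂ) • (1 : Matrix (Fin m) (Fin m) ℂ) - A
  set B' := (a' : ℂ) • (1 : Matrix (Fin m) (Fin m) ℂ) - A
  set d : ℂ := ((a' - a : ℝ) : ℂ)
  have hB : B.PosDef := hA.isHermitian.posDef_smul_one_sub hnorm
  have hB' : B'.PosDef := hA.isHermitian.posDef_smul_one_sub (hnorm.trans haa')
  have hresolvent : B⁻¹ - B'⁻¹ = d • (B⁻¹ * B'⁻¹) :=
    inv_sub_inv_of_sub_eq_smul_one hB.isUnit hB'.isUnit (by
      simp only [B, B', d, sub_sub_sub_cancel_right, Complex.ofReal_sub, sub_smul])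
  have hidentity : upperPotential a A - upperPotential a' A = d * (B⁻¹ * B'⁻¹).trace := by
    rw [upperPotential, upperPotential, ← trace_sub, hresolvent, trace_smul, smul_eq_mul]
  have hgap : (B⁻¹ * B'⁻¹).trace - (B'⁻¹ ^ 2).trace = d * (B⁻¹ * B'⁻¹ ^ 2).trace := by
    rw [← trace_sub, sq, ← Matrix.sub_mul, hresolvent, Matrix.smul_mul, Matrix.mul_assoc,
      trace_smul, smul_eq_mul]
  have hd : 0 < d := Complex.zero_lt_real.mpr (sub_pos.mpr haa')
  have : Nonempty (Fin m) := Fin.pos_iff_nonempty.mp hm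
  refine ⟨hidentity, ?_⟩
  rw [hidentity, ← sub_pos, ← mul_sub, hgap]
  exact mul_pos hd (mul_pos hd (hB.inv.trace_mul_sq_pos hB'.inv.isHermitian hB'.inv.isUnit))
end

section
/- Let A be a positive semidefinite operator on ℂ^m with m ≥ 1, and let a' > 0 satisfy ‖A‖ < a' and ‖A‖ < 1. Then Tr((a'I − A)^{-1}(I − A)) ≤ (1/m)·Tr((a'I − A)^{-1})·Tr(I − A). -/
/-!
Diagonalizing the Hermitian matrix `A` by its eigenvector unitary turns the three traces into sums
over the eigenvalues `λᵢ < a'`: of `(a' - λᵢ)⁻¹ (1 - λᵢ)`, of `(a' - λᵢ)⁻¹` and of `1 - λᵢ`. As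
functions of `λᵢ`, `(a' - λᵢ)⁻¹` increases and `1 - λᵢ` decreases, so the inequality is Chebyshev's
sum inequality.
-/

open scoped ComplexOrder

open Unitary

theorem sum_inv_sub_mul_sub_le {ι : Type*} [Fintype ι] [Nonempty ι] {μ : ι → ℝ} {a : ℝ}
    (b : ℝ) (h : ∀ i, μ i < a) :
    ∑ i, (a - μ i)⁻¹ * (b - μ i) ≤
      1 / Fintype.card ι * (∑ i, (a - μ i)⁻¹) * ∑ i, (b - μ i) := by
  have hanti : Antivary (fun i ↦ (a - μ i)⁻¹) (fun i ↦ b - μ i) := fun i j hij ↦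
    inv_anti₀ (sub_pos.2 (h i)) (by linarith)
  rw [mul_assoc, one_div, le_inv_mul_iff₀ (by positivity)]
  exact hanti.card_mul_sum_le_sum_mul_sum

namespace Matrix

variable {n 𝕜 : Type*} [Fintype n] [DecidableEq n] [RCLike 𝕜]

theorem trace_conjStarAlgAut (U : unitaryGroup n 𝕜) (X : Matrix n n 𝕜) :
    trace (conjStarAlgAut 𝕜 _ U X) = trace X := by
  rw [conjStarAlgAut_apply, trace_mul_cycle, coe_star_mul_self, one_mul]

namespace IsHermitian

variable {A : Matrix n n 𝕜} (hA : A.IsHermitian)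
include hA

theorem eigenvalues_le_norm_toEuclideanCLM (i : n) :
    hA.eigenvalues i ≤ ‖toEuclideanCLM (𝕜 := 𝕜) A‖ := by
  have : Nonempty n := ⟨i⟩
  have hmem := spectrum.algebraMap_mem 𝕜 (hA.eigenvalues_mem_spectrum_real i)
  rw [← AlgEquiv.spectrum_eq (toEuclideanCLM (𝕜 := 𝕜) (n := n)) A] at hmem
  have hle := spectrum.norm_le_norm_of_mem hmem
  rw [Algebra.algebraMap_eq_smul_one, norm_smul, norm_one, mul_one, Real.norm_eq_abs] at hle
  exact (le_abs_self _).trans hle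

theorem smul_one_sub_eq_conjStarAlgAut (c : 𝕜) :
    c • 1 - A = conjStarAlgAut 𝕜 _ hA.eigenvectorUnitary
      (diagonal fun i ↦ c - hA.eigenvalues i) := by
  conv_lhs => rw [hA.spectral_theorem]
  rw [← map_one (conjStarAlgAut 𝕜 _ hA.eigenvectorUnitary), ← map_smul, ← map_sub,
    smul_one_eq_diagonal, diagonal_sub]
  rfl

theorem inv_smul_one_sub_eq_conjStarAlgAut {c : 𝕜} (hc : ∀ i, (hA.eigenvalues i : 𝕜) ≠ c) :
    (c • 1 - A)⁻¹ = conjStarAlgAut 𝕜 _ hA.eigenvectorUnitary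
      (diagonal fun i ↦ (c - hA.eigenvalues i)⁻¹) := by
  refine inv_eq_left_inv ?_
  rw [hA.smul_one_sub_eq_conjStarAlgAut, ← map_mul, diagonal_mul_diagonal,
    ← map_one (conjStarAlgAut 𝕜 _ hA.eigenvectorUnitary), ← diagonal_one]
  congr! with i
  exact inv_mul_cancel₀ (sub_ne_zero.2 (hc i).symm)

end IsHermitian

end Matrix

theorem stmt13_general {m : ℕ} (hm : 1 ≤ m) (A : Matrix (Fin m) (Fin m) ℂ) (hA : A.PosSemidef)
    (a' : ℝ)
    (hnorm : ‖Matrix.toEuclideanCLM (𝕜 := ℂ) A‖ < a') :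
    Matrix.trace (((a' : ℂ) • (1 : Matrix (Fin m) (Fin m) ℂ) - A)⁻¹ * (1 - A)) ≤
      (1 / (m : ℂ)) * Matrix.trace (((a' : ℂ) • (1 : Matrix (Fin m) (Fin m) ℂ) - A)⁻¹) *
        Matrix.trace (1 - A) := by
  have : Nonempty (Fin m) := ⟨⟨0, hm⟩⟩
  have hμ i : hA.1.eigenvalues i < a' :=
    (hA.1.eigenvalues_le_norm_toEuclideanCLM i).trans_lt hnorm
  have hμ_ne i : (hA.1.eigenvalues i : ℂ) ≠ a' := by exact_mod_cast (hμ i).ne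
  have hone_sub := hA.1.smul_one_sub_eq_conjStarAlgAut 1
  rw [one_smul] at hone_sub
  rw [hA.1.inv_smul_one_sub_eq_conjStarAlgAut hμ_ne, hone_sub, ← map_mul,
    Matrix.trace_conjStarAlgAut, Matrix.trace_conjStarAlgAut, Matrix.trace_conjStarAlgAut,
    Matrix.diagonal_mul_diagonal]
  simp only [Matrix.trace_diagonal, RCLike.ofReal_eq_complex_ofReal]
  have hreal := sum_inv_sub_mul_sub_le 1 hμ
  rw [Fintype.card_fin] at hreal
  have hcomplex := Complex.real_le_real.2 hreal
  push_cast at hcomplex ⊢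
  exact hcomplex

/-- If `A ⪰ 0` on `ℂ^m` (`m ≥ 1`), `a' > 0`, `‖A‖ < a'` and `‖A‖ < 1`, then
`Tr((a'I - A)⁻¹ (I - A)) ≤ (1/m) · Tr((a'I - A)⁻¹) · Tr(I - A)`. -/
theorem stmt13 {m : ℕ} (hm : 1 ≤ m) (A : Matrix (Fin m) (Fin m) ℂ) (hA : A.PosSemidef)
    (a' : ℝ) (ha' : 0 < a')
    (hnorm : ‖Matrix.toEuclideanCLM (𝕜 := ℂ) A‖ < a')
    (hnorm1 : ‖Matrix.toEuclideanCLM (𝕜 := ℂ) A‖ < 1) :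
    Matrix.trace (((a' : ℂ) • (1 : Matrix (Fin m) (Fin m) ℂ) - A)⁻¹ * (1 - A)) ≤
      (1 / (m : ℂ)) * Matrix.trace (((a' : ℂ) • (1 : Matrix (Fin m) (Fin m) ℂ) - A)⁻¹) *
        Matrix.trace (1 - A) :=
  stmt13_general hm A hA a' hnorm
end
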